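/- For a finitely supported multi-index ν with |ν| ≥ 1, the sum over all multi-indices η with 0 < η < ν of C(ν,η)·[1/2]_{|η|}·[1/2]_{|ν-η|} is at most 2·[1/2]_{|ν|}, where C(ν,η) = ∏_j C(ν_j,η_j) and [1/2]_n is the absolute value of the falling factorial of 1/2. -/

import Mathlib

/-!
Write `p k = (descPochhammer ℝ k).eval (1/2)`, so `ffHalf k = |p k|`, and `n = |ν|`.
Grouping the multi-indices `η` by their degree, the multinomial Vandermonde identity
`∑_{η ≤ ν, |η| = k} C(ν,η) = C(n,k)` turns the sum into `∑_{0<k<n} C(n,k) |p k| |p (n-k)|`.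
The factors `1/2 - j` of `p (k+1)` are negative for `j ≥ 1`, so `p (k+1)` has sign `(-1)^k` and
every term of that sum is `(-1)^n C(n,k) p k p (n-k)`. By Chu–Vandermonde,
`∑_{k ≤ n} C(n,k) p k p (n-k) = (descPochhammer ℝ n).eval 1 = 0` for `n ≥ 2`; moving the two
boundary terms `p n` across evaluates the sum to exactly `2 |p n|`. For `n ≤ 1` the sum is empty.
-/

/-- `ffHalf n = |(1/2)_n|`, the absolute value of the falling factorial of `1/2`. -/
noncomputable def ffHalf (n : ℕ) : ℝ := |(descPochhammer ℝ n).eval (1/2 : ℝ)|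

/-- degree `|ν|` of a multi-index: the sum of its entries. -/
def mdeg (ν : ℕ →₀ ℕ) : ℕ := ν.sum fun _ k => k

/-- multi-index binomial coefficient `C(ν,η) = ∏_j C(ν_j, η_j)`. -/
def mchoose (ν η : ℕ →₀ ℕ) : ℕ := ∏ j ∈ ν.support, (ν j).choose (η j)

open Finset Polynomial

theorem descPochhammer_eval_add {R : Type*} [CommRing R] (x y : R) (n : ℕ) :
    (descPochhammer R n).eval (x + y) = ∑ ij ∈ antidiagonal n,
      n.choose ij.1 * ((descPochhammer R ij.1).eval x * (descPochhammer R ij.2).eval y) := by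
  have smeval_eq (k : ℕ) (z : R) :
      (descPochhammer ℤ k).smeval z = (descPochhammer R k).eval z := by
    rw [← aeval_eq_smeval, aeval_def, ← eval_map, descPochhammer_map]
  simpa only [smeval_eq] using Ring.descPochhammer_smeval_add n (Commute.all x y)

theorem descPochhammer_eval_one_eq_zero {R : Type*} [CommRing R] {n : ℕ} (hn : 2 ≤ n) :
    (descPochhammer R n).eval 1 = 0 := by
  simpa [Nat.descFactorial_eq_zero_iff_lt.mpr (by omega : 1 < n)] using
    descPochhammer_eval_eq_descFactorial R 1 n

theorem neg_one_pow_mul_descPochhammer_eval_nonneg {x : ℝ} (hx₀ : 0 ≤ x) (hx₁ : x ≤ 1) (k : ℕ) :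
    0 ≤ (-1) ^ k * (descPochhammer ℝ (k + 1)).eval x := by
  induction k with
  | zero => simpa using hx₀
  | succ k ih =>
    have hk : x ≤ k + 1 := by linarith [(Nat.cast_nonneg k : (0 : ℝ) ≤ k)]
    calc (0 : ℝ) ≤ (-1) ^ k * (descPochhammer ℝ (k + 1)).eval x * (k + 1 - x) :=
          mul_nonneg ih (by linarith)
      _ = (-1) ^ (k + 1) * (descPochhammer ℝ (k + 1 + 1)).eval x := by
          rw [descPochhammer_succ_eval (k + 1)]; push_cast; ring

theorem descPochhammer_eval_half_succ (k : ℕ) :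
    (descPochhammer ℝ (k + 1)).eval (1 / 2) = (-1) ^ k * ffHalf (k + 1) := by
  have h := neg_one_pow_mul_descPochhammer_eval_nonneg (x := 1 / 2) (by norm_num) (by norm_num) k
  have habs : |(descPochhammer ℝ (k + 1)).eval (1 / 2)|
      = (-1) ^ k * (descPochhammer ℝ (k + 1)).eval (1 / 2) := by
    rw [← abs_of_nonneg h, abs_mul, abs_neg_one_pow, one_mul]
  rw [ffHalf, habs, ← mul_assoc, ← pow_add, Even.neg_one_pow ⟨k, rfl⟩, one_mul]

theorem sum_Ioo_choose_mul_ffHalf {n : ℕ} (hn : 2 ≤ n) :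
    ∑ k ∈ Ioo 0 n, n.choose k * ffHalf k * ffHalf (n - k) = 2 * ffHalf n := by
  obtain ⟨m, rfl⟩ : ∃ m, n = m + 2 := ⟨n - 2, by omega⟩
  set p : ℕ → ℝ := fun k => (descPochhammer ℝ k).eval (1 / 2)
  have vandermonde :
      ∑ k ∈ range (m + 2 + 1), (m + 2).choose k * (p k * p (m + 2 - k)) = 0 := by
    rw [← Nat.sum_antidiagonal_eq_sum_range_succ (fun i j => (m + 2).choose i * (p i * p j)),
      ← descPochhammer_eval_add, add_halves, descPochhammer_eval_one_eq_zero hn]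
  have inner : ∀ k ∈ Ioo 0 (m + 2), (m + 2).choose k * (p k * p (m + 2 - k))
      = (-1) ^ m * ((m + 2).choose k * ffHalf k * ffHalf (m + 2 - k)) := by
    intro k hk
    obtain ⟨a, rfl⟩ : ∃ a, k = a + 1 := ⟨k - 1, by grind⟩
    have hb : m + 2 - (a + 1) = m - a + 1 := by grind
    have hsign : (-1 : ℝ) ^ m = (-1) ^ a * (-1) ^ (m - a) := by
      rw [← pow_add, Nat.add_sub_cancel' (by grind)]
    simp only [p, hb, descPochhammer_eval_half_succ, hsign]
    ring
  have top : p (m + 2) = -(-1) ^ m * ffHalf (m + 2) := by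
    simp only [p, descPochhammer_eval_half_succ (m + 1), pow_succ]; ring
  have bottom : p 0 = 1 := by simp [p]
  rw [sum_range_succ, range_eq_Ico, ← Ioo_insert_left (by omega), sum_insert (by simp),
    sum_congr rfl inner, ← mul_sum] at vandermonde
  simp only [Nat.choose_self, Nat.choose_zero_right, Nat.sub_self, Nat.sub_zero, Nat.cast_one,
    top, bottom] at vandermonde
  have h : (-1 : ℝ) ^ m * (∑ k ∈ Ioo 0 (m + 2), (m + 2).choose k * ffHalf k * ffHalf (m + 2 - k)
      - 2 * ffHalf (m + 2)) = 0 := by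
    linear_combination vandermonde
  exact sub_eq_zero.mp ((mul_eq_zero.mp h).resolve_left (pow_ne_zero _ (by norm_num)))

theorem Finsupp.prod_sum_Iic {ι R : Type*} [CommSemiring R] [DecidableEq ι] (ν : ι →₀ ℕ)
    (g : ι → ℕ → R) :
    ∏ i ∈ ν.support, ∑ k ∈ Iic (ν i), g i k = ∑ η ∈ Iic ν, ∏ i ∈ ν.support, g i (η i) := by
  rw [prod_sum, ← Icc_bot, Finsupp.Icc_eq, bot_eq_zero, Finsupp.support_zero, empty_union,
    Finset.finsupp, sum_map]
  refine (Finset.sum_congr ?_ fun p _ => ?_).symm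
  · ext p
    simp [← Icc_bot]
  rw [← prod_attach ν.support]
  refine Finset.prod_congr rfl fun i _ => ?_
  simp [Finsupp.indicator_of_mem i.2]

lemma mdeg_add (η ξ : ℕ →₀ ℕ) : mdeg (η + ξ) = mdeg η + mdeg ξ := map_add Finsupp.degree η ξ

lemma mdeg_eq_zero_iff {η : ℕ →₀ ℕ} : mdeg η = 0 ↔ η = 0 := Finsupp.degree_eq_zero_iff η

lemma mdeg_eq_sum_of_le {η ν : ℕ →₀ ℕ} (h : η ≤ ν) : mdeg η = ∑ i ∈ ν.support, η i :=
  Finsupp.sum_of_support_subset η (Finsupp.support_mono h) _ fun _ _ => rfl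

lemma mdeg_tsub {η ν : ℕ →₀ ℕ} (h : η ≤ ν) : mdeg (ν - η) = mdeg ν - mdeg η := by
  have h_add := mdeg_add η (ν - η)
  rw [add_tsub_cancel_of_le h] at h_add
  omega

lemma mem_Ioo_zero_iff_mdeg {η ν : ℕ →₀ ℕ} :
    η ∈ Ioo 0 ν ↔ η ≤ ν ∧ mdeg η ∈ Ioo 0 (mdeg ν) := by
  simp only [mem_Ioo, pos_iff_ne_zero, Ne, mdeg_eq_zero_iff]
  constructor
  · rintro ⟨hη, hην⟩
    have hsub : mdeg (ν - η) ≠ 0 := by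
      rw [Ne, mdeg_eq_zero_iff, tsub_eq_zero_iff_le]
      exact not_le_of_gt hην
    rw [mdeg_tsub hην.le] at hsub
    exact ⟨hην.le, hη, by omega⟩
  · rintro ⟨hην, hη, hlt⟩
    exact ⟨hη, lt_of_le_of_ne hην (by rintro rfl; exact lt_irrefl _ hlt)⟩

theorem sum_Iic_C_mchoose_mul_X_pow (ν : ℕ →₀ ℕ) :
    ∑ η ∈ Iic ν, C (mchoose ν η) * (X : ℕ[X]) ^ mdeg η = (X + 1) ^ mdeg ν := by
  calc ∑ η ∈ Iic ν, C (mchoose ν η) * (X : ℕ[X]) ^ mdeg η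
      = ∑ η ∈ Iic ν, ∏ i ∈ ν.support, C ((ν i).choose (η i)) * X ^ η i := by
        refine Finset.sum_congr rfl fun η hη => ?_
        rw [prod_mul_distrib, prod_pow_eq_pow_sum, ← map_prod, mchoose,
          mdeg_eq_sum_of_le (mem_Iic.mp hη)]
    _ = ∏ i ∈ ν.support, ∑ k ∈ Iic (ν i), C ((ν i).choose k) * X ^ k :=
        (Finsupp.prod_sum_Iic ν fun i k => C ((ν i).choose k) * X ^ k).symm
    _ = ∏ i ∈ ν.support, (X + 1) ^ ν i := by
        refine Finset.prod_congr rfl fun i _ => ?_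
        rw [add_pow, ← Nat.range_succ_eq_Iic]
        refine Finset.sum_congr rfl fun k _ => ?_
        rw [one_pow, mul_one, mul_comm, ← C_eq_natCast, Nat.cast_id]
    _ = (X + 1) ^ mdeg ν := prod_pow_eq_pow_sum _ _ _

theorem sum_mchoose_filter_mdeg_eq (ν : ℕ →₀ ℕ) (k : ℕ) :
    ∑ η ∈ Iic ν with mdeg η = k, mchoose ν η = (mdeg ν).choose k := by
  have h := congrArg (coeff · k) (sum_Iic_C_mchoose_mul_X_pow ν)
  simp only [finsetSum_coeff, coeff_C_mul_X_pow, coeff_X_add_one_pow, Nat.cast_id,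
    eq_comm (a := k)] at h
  rwa [sum_filter]

theorem sum_Ioo_zero_mchoose_smul {M : Type*} [AddCommMonoid M] (ν : ℕ →₀ ℕ)
    (g : ℕ → ℕ → M) :
    ∑ η ∈ Ioo 0 ν, mchoose ν η • g (mdeg η) (mdeg (ν - η))
      = ∑ k ∈ Ioo 0 (mdeg ν), (mdeg ν).choose k • g k (mdeg ν - k) := by
  rw [← sum_fiberwise_of_maps_to (g := mdeg) (t := Ioo 0 (mdeg ν))
    fun η hη => (mem_Ioo_zero_iff_mdeg.mp hη).2]
  refine Finset.sum_congr rfl fun k hk => ?_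
  have fiber : {η ∈ Ioo 0 ν | mdeg η = k} = {η ∈ Iic ν | mdeg η = k} := by
    ext η
    simp only [mem_filter, mem_Iic, mem_Ioo_zero_iff_mdeg]
    grind
  rw [fiber, ← sum_mchoose_filter_mdeg_eq, sum_smul]
  refine Finset.sum_congr rfl fun η hη => ?_
  obtain ⟨hην, rfl⟩ := mem_filter.mp hη
  rw [mdeg_tsub (mem_Iic.mp hην)]

theorem ffHalf_multiindex_sum_lt_general (ν : ℕ →₀ ℕ) :
    ∑ η ∈ Finset.Ioo 0 ν,
        (mchoose ν η : ℝ) * ffHalf (mdeg η) * ffHalf (mdeg (ν - η))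
      ≤ 2 * ffHalf (mdeg ν) := by
  have by_degree := sum_Ioo_zero_mchoose_smul ν fun a b => ffHalf a * ffHalf b
  simp only [nsmul_eq_mul, ← mul_assoc] at by_degree
  rw [by_degree]
  rcases lt_or_ge (mdeg ν) 2 with hn | hn
  · rw [sum_eq_zero fun k hk => by simp only [mem_Ioo] at hk; omega]
    exact mul_nonneg zero_le_two (abs_nonneg _)
  · exact (sum_Ioo_choose_mul_ffHalf hn).le

theorem ffHalf_multiindex_sum_lt (ν : ℕ →₀ ℕ) (hν : 1 ≤ mdeg ν) :
    ∑ η ∈ Finset.Ioo 0 ν,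
        (mchoose ν η : ℝ) * ffHalf (mdeg η) * ffHalf (mdeg (ν - η))
      ≤ 2 * ffHalf (mdeg ν) :=
  ffHalf_multiindex_sum_lt_general ν
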